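/- Up to isomorphism, C₅ is the unique doubly saturated R(3,3)-good graph. -/

import Mathlib

/-- The cyclic distance ‖x‖ = min(x mod n, n − (x mod n)) for x ∈ ℤ/nℤ. -/
def cyclicDist (n : ℕ) (x : ZMod n) : ℕ := min x.val (n - x.val)

/-- The circulant graph on `ZMod n` with distance set `S`: `x ~ y` iff `‖x - y‖ ∈ S`. -/
def circ (n : ℕ) (S : Set ℕ) : SimpleGraph (ZMod n) :=
  SimpleGraph.fromRel (fun x y => cyclicDist n (x - y) ∈ S)

/-- `G` is `R(s,t)`-good: no clique of size `s` and no independent set of size `t`. -/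
def RGood {V : Type*} (s t : ℕ) (G : SimpleGraph V) : Prop :=
  G.CliqueFree s ∧ Gᶜ.CliqueFree t

/-- `G` is doubly saturated `R(s,t)`-good. -/
def DoublySaturated {V : Type*} (s t : ℕ) (G : SimpleGraph V) : Prop :=
  RGood s t G ∧
  (∀ u v : V, u ≠ v → ¬ G.Adj u v → ¬ (G ⊔ SimpleGraph.edge u v).CliqueFree s) ∧
  (∀ u v : V, G.Adj u v → ¬ ((G.deleteEdges {s(u, v)})ᶜ.CliqueFree t)) ∧
  G ≠ ⊤ ∧ Gᶜ ≠ ⊤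

/-!
A doubly saturated `R(3,3)`-good graph `G` is triangle-free with triangle-free complement, so every
vertex has at most two neighbours and at most two non-neighbours, and `G` has at most five vertices.
Adding an edge `uv` can only create a triangle through a common neighbour of `u` and `v`; dually,
since the complement of `G` minus `uv` is `Gᶜ` plus `uv`, deleting an edge can only create an
independent triple through a common non-neighbour. Starting from a non-edge and alternating these
two facts produces a closed walk `u w v z t` of length five whose consecutive vertices are adjacent.
Triangle-freeness forbids its chords, so it is an induced `C₅` filling up all of `G`.
-/

open Finset

namespace SimpleGraph

variable {V : Type*} {G : SimpleGraph V}

theorem cliqueFree_three_iff :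
    G.CliqueFree 3 ↔ ∀ a b c, G.Adj a b → G.Adj a c → G.Adj b c → False := by
  classical
  refine ⟨fun h a b c hab hac hbc => h {a, b, c} (is3Clique_triple_iff.mpr ⟨hab, hac, hbc⟩), ?_⟩
  intro h s hs
  obtain ⟨a, b, c, hab, hac, hbc, rfl⟩ := is3Clique_iff.mp hs
  exact h a b c hab hac hbc

theorem CliqueFree.isClique_compl_neighborSet (hG : G.CliqueFree 3) (v : V) :
    Gᶜ.IsClique (G.neighborSet v) :=
  fun x hx y hy hxy => ⟨hxy, cliqueFree_three_iff.mp hG v x y hx hy⟩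

theorem CliqueFree.degree_lt_of_compl_cliqueFree {t : ℕ} (hG : G.CliqueFree 3)
    (hGc : Gᶜ.CliqueFree t) (v : V) [Fintype (G.neighborSet v)] : G.degree v < t := by
  by_contra! ht
  have hclique : Gᶜ.IsNClique (G.degree v) (G.neighborFinset v) :=
    ⟨by simpa using hG.isClique_compl_neighborSet v, rfl⟩
  exact hclique.not_cliqueFree (hGc.mono ht)

theorem card_le_five_of_cliqueFree_three [Fintype V] (hG : G.CliqueFree 3)
    (hGc : Gᶜ.CliqueFree 3) : Fintype.card V ≤ 5 := by
  classical
  rcases isEmpty_or_nonempty V with hV | ⟨⟨v⟩⟩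
  · simp
  have hdeg := hG.degree_lt_of_compl_cliqueFree hGc v
  have hdeg_compl := hGc.degree_lt_of_compl_cliqueFree (by rwa [compl_compl]) v
  rw [degree_compl] at hdeg_compl
  omega

theorem CliqueFree.exists_adj_adj_of_not_cliqueFree_sup_edge {u v : V} (hG : G.CliqueFree 3)
    (h : ¬(G ⊔ edge u v).CliqueFree 3) : ∃ w, G.Adj u w ∧ G.Adj v w := by
  classical
  obtain ⟨t, ht⟩ := not_forall_not.mp h
  have hu : u ∈ t := hG.mem_of_sup_edge_isNClique ht
  have hv : v ∈ t := hG.mem_of_sup_edge_isNClique (edge_comm u v ▸ ht)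
  obtain ⟨w, hwt, hw⟩ := exists_mem_notMem_of_card_lt_card (s := {u, v}) (t := t)
    (by rw [ht.card_eq]; exact card_le_two.trans_lt (by norm_num))
  simp only [mem_insert, mem_singleton, not_or] at hw
  have hadj : ∀ x ∈ t, x ≠ w → G.Adj x w := fun x hx hxw => by
    simpa [edge_adj, hw.1, hw.2] using ht.isClique hx hwt hxw
  exact ⟨w, hadj u hu (Ne.symm hw.1), hadj v hv (Ne.symm hw.2)⟩

theorem compl_deleteEdges_edge (u v : V) : (G.deleteEdges {s(u, v)})ᶜ = Gᶜ ⊔ edge u v := by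
  rw [deleteEdges, compl_sdiff, himp_eq, sup_comm]
  rfl

theorem nonempty_iso_cycleGraph_five_of_adj_add_one [Fintype V] (hG : G.CliqueFree 3)
    (hcard : Fintype.card V ≤ 5) (f : Fin 5 → V) (hadj : ∀ i, G.Adj (f i) (f (i + 1)))
    (hne : ∀ i, f i ≠ f (i + 2)) : Nonempty (G ≃g cycleGraph 5) := by
  have hpos : ∀ i j : Fin 5, i = j ∨ j = i + 1 ∨ i = j + 1 ∨ j = i + 2 ∨ i = j + 2 := by decide
  have hcycle : ∀ i : Fin 5, (cycleGraph 5).Adj i (i + 1) ∧ ¬(cycleGraph 5).Adj i (i + 2) := by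
    decide
  have hchord : ∀ i, ¬G.Adj (f i) (f (i + 2)) := fun i h =>
    cliqueFree_three_iff.mp hG _ _ _ (hadj i) h (by simpa [add_assoc] using hadj (i + 1))
  have hinj : Function.Injective f := by
    intro i j hij
    rcases hpos i j with h | rfl | rfl | rfl | rfl
    · exact h
    · exact absurd hij (hadj i).ne
    · exact absurd hij.symm (hadj j).ne
    · exact absurd hij (hne i)
    · exact absurd hij.symm (hne j)
  have hbij : Function.Bijective f := by
    refine (Fintype.bijective_iff_injective_and_card f).mpr ⟨hinj, ?_⟩
    have := Fintype.card_le_of_injective f hinj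
    simp only [Fintype.card_fin] at this ⊢
    omega
  have key : ∀ i j, G.Adj (f i) (f j) ↔ (cycleGraph 5).Adj i j := by
    intro i j
    rcases hpos i j with rfl | rfl | rfl | rfl | rfl
    · exact iff_of_false G.irrefl (cycleGraph 5).irrefl
    · exact iff_of_true (hadj i) (hcycle i).1
    · exact iff_of_true (hadj j).symm (hcycle j).1.symm
    · exact iff_of_false (hchord i) (hcycle i).2
    · exact iff_of_false (fun h => hchord j h.symm) (fun h => (hcycle j).2 h.symm)
  exact ⟨(RelIso.mk (Equiv.ofBijective f hbij) (key _ _)).symm⟩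

end SimpleGraph

open SimpleGraph

theorem doublySaturated_cycleGraph_five : DoublySaturated 3 3 (cycleGraph 5) := by
  refine ⟨⟨?_, ?_⟩, ?_, ?_, ?_, ?_⟩
  · rw [cliqueFree_three_iff]; decide
  · rw [cliqueFree_three_iff]; decide
  · simp only [cliqueFree_three_iff, sup_adj, edge_adj, cycleGraph_adj]; decide
  · simp only [compl_deleteEdges_edge, cliqueFree_three_iff, sup_adj, edge_adj, compl_adj,
      cycleGraph_adj]; decide
  · exact ne_of_apply_ne (·.Adj 0 2) (by decide)
  · exact ne_of_apply_ne (·.Adj 0 1) (by decide)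

theorem DoublySaturated.nonempty_iso_cycleGraph_five {V : Type*} [Fintype V] {G : SimpleGraph V}
    (h : DoublySaturated 3 3 G) : Nonempty (G ≃g cycleGraph 5) := by
  obtain ⟨⟨hG, hGc⟩, hadd, hdel, hne_top, -⟩ := h
  have common_adj {x y : V} (hxy : x ≠ y) (hn : ¬G.Adj x y) : ∃ w, G.Adj x w ∧ G.Adj y w :=
    hG.exists_adj_adj_of_not_cliqueFree_sup_edge (hadd x y hxy hn)
  have common_nonadj {x y : V} (hxy : G.Adj x y) : ∃ z, Gᶜ.Adj x z ∧ Gᶜ.Adj y z :=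
    hGc.exists_adj_adj_of_not_cliqueFree_sup_edge (compl_deleteEdges_edge x y ▸ hdel x y hxy)
  obtain ⟨u, v, huv, hnuv⟩ : ∃ u v, u ≠ v ∧ ¬G.Adj u v := by
    by_contra! h
    exact hne_top (eq_top_iff.mpr fun x y hxy => h x y hxy)
  obtain ⟨w, huw, hvw⟩ := common_adj huv hnuv
  obtain ⟨z, ⟨hwz, hnwz⟩, ⟨huz, hnuz⟩⟩ := common_nonadj huw.symm
  have hvz : G.Adj v z := by
    by_contra hnvz
    exact cliqueFree_three_iff.mp hGc u v z ⟨huv, hnuv⟩ ⟨huz, hnuz⟩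
      ⟨fun h => hnwz (h ▸ hvw.symm), hnvz⟩
  obtain ⟨t, hzt, hut⟩ := common_adj huz.symm (fun h => hnuz h.symm)
  have hvt : v ≠ t := fun h => hnuv (h ▸ hut)
  have htw : t ≠ w := fun h => hnwz (h ▸ hzt).symm
  refine nonempty_iso_cycleGraph_five_of_adj_add_one hG (card_le_five_of_cliqueFree_three hG hGc)
    ![u, w, v, z, t] ?_ ?_ <;> intro i <;> fin_cases i
  exacts [huw, hvw.symm, hvz, hzt, hut.symm, huv, hwz, hvt, huz.symm, htw]

theorem stmt_10 :
    DoublySaturated 3 3 (SimpleGraph.cycleGraph 5) ∧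
    ∀ {V : Type} [Fintype V] (G : SimpleGraph V),
      DoublySaturated 3 3 G → Nonempty (G ≃g SimpleGraph.cycleGraph 5) :=
  ⟨doublySaturated_cycleGraph_five, fun _ h => h.nonempty_iso_cycleGraph_five⟩
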